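/- (Progress / program evaluation) If a program decl* stmt* is well-formed (decl* ⊢ₛ Γ and Γ ⊢ stmt* ok), then there exists a unique store μ′ such that decl* stmt* ⇓ μ′, and dom(μ′) = dom(μ(Γ)). -/

import Mathlib

/-- Rounding up to the nearest multiple of `M`. -/
noncomputable def roundUp (M d : ℕ) : ℕ := sInf {m : ℕ | ∃ n : ℕ, m = n * M ∧ d ≤ m}

/-- Tensor types are tuples of naturals. -/
abbrev Ty := List ℕ
/-- Multi-indices. -/
abbrev Index := List ℕ

/-- `IdxLe i t`: the multi-index `i` (with components in {1,2,…}) is bounded by `t`. -/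
def IdxLe (i t : Index) : Prop :=
  i.length = t.length ∧ ∀ l, l < t.length → 1 ≤ i.getD l 0 ∧ i.getD l 0 ≤ t.getD l 0

/-- Swap the `m`-th and `n`-th components (1-based). -/
def swapIdx (t : List ℕ) (m n : ℕ) : List ℕ :=
  (t.set (m-1) (t.getD (n-1) 0)).set (n-1) (t.getD (m-1) 0)

/-- Delete the `m`-th and `n`-th components (1-based, `m < n`). -/
def delete2 (t : List ℕ) (m n : ℕ) : List ℕ :=
  (t.eraseIdx (n-1)).eraseIdx (m-1)

/-- Insert value `l` at the `m`-th and `n`-th positions (1-based, `m < n`). -/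
def insert2 (i : List ℕ) (m n l : ℕ) : List ℕ :=
  (i.insertIdx (m-1) l).insertIdx (n-1) l

/-- Pad a tensor type componentwise. -/
noncomputable def padT (M : ℕ) (t : Ty) : Ty := t.map (roundUp M)

/-- The padding region of a type: indices within the padded bounds but not the original ones. -/
def PadReg (M : ℕ) (t : Ty) (i : Index) : Prop := ¬ IdxLe i t ∧ IdxLe i (padT M t)

inductive Op | add | sub | mul | div
deriving DecidableEq

/-- Expressions of the tensor model language. -/
inductive Expr
| var : String → Expr
| paren : Expr → Expr
| binop : Op → Expr → Expr → Expr
| prod : Expr → Expr → Expr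
| trans : Expr → ℕ → ℕ → Expr
| contr : Expr → ℕ → ℕ → Expr

/-- A static context maps identifiers to tensor types. -/
abbrev Ctx := String → Option Ty

/-- Componentwise padding of a static context. -/
noncomputable def padCtx (M : ℕ) (Γ : Ctx) : Ctx := fun x => (Γ x).map (padT M)

/-- The typing rules of the tensor model language. -/
inductive HasTy (Γ : Ctx) : Expr → Ty → Prop
| var {x t} : Γ x = some t → HasTy Γ (.var x) t
| paren {e t} : HasTy Γ e t → HasTy Γ (.paren e) t
| prod {e₀ e₁ t₀ t₁} : HasTy Γ e₀ t₀ → HasTy Γ e₁ t₁ → HasTy Γ (.prod e₀ e₁) (t₀ ++ t₁)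
| trans {e t m n} : HasTy Γ e t → 1 ≤ m → m < n → n ≤ t.length →
    HasTy Γ (.trans e m n) (swapIdx t m n)
| contr {e t m n} : HasTy Γ e t → 1 ≤ m → m < n → n ≤ t.length →
    t.getD (m-1) 0 = t.getD (n-1) 0 → HasTy Γ (.contr e m n) (delete2 t m n)
| elem {op e₀ e₁ t} : HasTy Γ e₀ t → HasTy Γ e₁ t → HasTy Γ (.binop op e₀ e₁) t
| smul {e₀ e₁ t} : HasTy Γ e₀ [] → HasTy Γ e₁ t → HasTy Γ (.binop .mul e₀ e₁) t
| sdiv {e₀ e₁ t} : HasTy Γ e₀ t → HasTy Γ e₁ [] → HasTy Γ (.binop .div e₀ e₁) t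

/-- Syntax-directed type inference. -/
def inferTy (Γ : Ctx) : Expr → Option Ty
| .var x => Γ x
| .paren e => inferTy Γ e
| .prod e₀ e₁ => do pure ((← inferTy Γ e₀) ++ (← inferTy Γ e₁))
| .trans e m n => do
    let t ← inferTy Γ e
    if 1 ≤ m ∧ m < n ∧ n ≤ t.length then pure (swapIdx t m n) else none
| .contr e m n => do
    let t ← inferTy Γ e
    if 1 ≤ m ∧ m < n ∧ n ≤ t.length ∧ t.getD (m-1) 0 = t.getD (n-1) 0 then
      pure (delete2 t m n) else none
| .binop op e₀ e₁ => do
    let t₀ ← inferTy Γ e₀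
    let t₁ ← inferTy Γ e₁
    if t₀ = t₁ then pure t₀
    else if op = .mul ∧ t₀ = [] then pure t₁
    else if op = .div ∧ t₁ = [] then pure t₀
    else none

/-- The value domain `𝕍 ∪ {•}`: `none` is the undefined value `•`. -/
abbrev W (V : Type) := Option V

/-- Extended addition: `•` is absorbing. -/
def wadd {V : Type} [Add V] : W V → W V → W V
| some a, some b => some (a + b)
| _, _ => none

def wsub {V : Type} [Sub V] : W V → W V → W V
| some a, some b => some (a - b)
| _, _ => none

def wmul {V : Type} [Mul V] : W V → W V → W V
| some a, some b => some (a * b)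
| _, _ => none

/-- Controlled division on `𝕍 ∪ {•}`: `0/0 = 0`, `0/• = 0`, otherwise `•` absorbs
    and division by zero is undefined. -/
def wdiv {V : Type} [Field V] [DecidableEq V] : W V → W V → W V
| some a, some b => if b = 0 then (if a = 0 then some 0 else none) else some (a / b)
| some a, none => if a = 0 then some 0 else none
| none, _ => none

def applyOp {V : Type} [Field V] [DecidableEq V] : Op → W V → W V → W V
| .add => wadd
| .sub => wsub
| .mul => wmul
| .div => wdiv

/-- A dynamic store: a partial map from subscripted identifiers to `𝕍 ∪ {•}`. -/
abbrev Store (V : Type) := String × Index → Option (W V)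

/-- Denotational semantics of expression evaluation; `none` means evaluation is stuck
    (not well-defined), `some w` means the result is the value `w ∈ 𝕍 ∪ {•}`. -/
def eval {V : Type} [Field V] [DecidableEq V] (Γ : Ctx) (μ : Store V) :
    Expr → Index → Option (W V)
| .var x, i => μ (x, i)
| .paren e, i => eval Γ μ e i
| .prod e₀ e₁, i => do
    let t₀ ← inferTy Γ e₀
    let v₀ ← eval Γ μ e₀ (i.take t₀.length)
    let v₁ ← eval Γ μ e₁ (i.drop t₀.length)
    pure (wmul v₀ v₁)
| .trans e m n, i => eval Γ μ e (swapIdx i m n)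
| .contr e m n, i => do
    let t ← inferTy Γ e
    let vs ← (List.range (t.getD (m-1) 0)).mapM (fun l => eval Γ μ e (insert2 i m n (l+1)))
    pure (vs.foldl wadd (some 0))
| .binop op e₀ e₁, i => do
    let t₀ ← inferTy Γ e₀
    let t₁ ← inferTy Γ e₁
    if op = .mul ∧ t₀ = [] then
      let v₀ ← eval Γ μ e₀ []
      let v₁ ← eval Γ μ e₁ i
      pure (wmul v₀ v₁)
    else if op = .div ∧ t₁ = [] then
      let v₀ ← eval Γ μ e₀ i
      let v₁ ← eval Γ μ e₁ []
      pure (wdiv v₀ v₁)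
    else
      let v₀ ← eval Γ μ e₀ i
      let v₁ ← eval Γ μ e₁ i
      pure (applyOp op v₀ v₁)

open Classical

/-- The unique initial store determined by `Γ` and the ambient values `v`. -/
noncomputable def initStore {V : Type} (Γ : Ctx) (v : String → Index → W V) : Store V :=
  fun p => match Γ p.1 with
  | some t => if IdxLe p.2 t then some (v p.1 p.2) else none
  | none => none

/-- The unique padded initial store: values on the original domain, zero on padding. -/
noncomputable def initStoreP {V : Type} [Zero V] (M : ℕ) (Γ : Ctx)
    (v : String → Index → W V) : Store V :=
  fun p => match Γ p.1 with
  | some t =>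
      if IdxLe p.2 t then some (v p.1 p.2)
      else if IdxLe p.2 (padT M t) then some (some 0)
      else none
  | none => none

/-- A statement `x = e`. -/
abbrev Stmt := String × Expr

/-- Well-formedness of a statement list in context `Γ`. -/
def Ok (Γ : Ctx) (ss : List Stmt) : Prop :=
  ∀ s ∈ ss, ∃ t, Γ s.1 = some t ∧ HasTy Γ s.2 t

/-- Evaluation of a single assignment statement (rule ev-stmt). -/
inductive StepStmt {V : Type} [Field V] [DecidableEq V] (Γ : Ctx) :
    Store V → Stmt → Store V → Prop
| mk {μ : Store V} {x e t} :
    Γ x = some t →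
    (∀ i, IdxLe i t → μ (x, i) ≠ none) →
    (∀ i, IdxLe i t → (eval Γ μ e i).isSome) →
    StepStmt Γ μ (x, e)
      (fun p => if p.1 = x ∧ IdxLe p.2 t then eval Γ μ e p.2 else μ p)

/-- Evaluation of a statement sequence. -/
inductive StepStmts {V : Type} [Field V] [DecidableEq V] (Γ : Ctx) :
    Store V → List Stmt → Store V → Prop
| nil {μ} : StepStmts Γ μ [] μ
| cons {μ μ' μ'' s ss} : StepStmt Γ μ s μ' → StepStmts Γ μ' ss μ'' →
    StepStmts Γ μ (s :: ss) μ''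

/-- Evaluation of a single assignment statement with a padded store (rule ev-pad-stmt). -/
inductive StepStmtP {V : Type} [Field V] [DecidableEq V] (M : ℕ) (Γ : Ctx) :
    Store V → Stmt → Store V → Prop
| mk {μ : Store V} {x e t} :
    Γ x = some t →
    (∀ i, IdxLe i (padT M t) → μ (x, i) ≠ none) →
    (∀ i, IdxLe i (padT M t) → (eval (padCtx M Γ) μ e i).isSome) →
    StepStmtP M Γ μ (x, e)
      (fun p => if p.1 = x ∧ IdxLe p.2 (padT M t) then eval (padCtx M Γ) μ e p.2 else μ p)

inductive StepStmtsP {V : Type} [Field V] [DecidableEq V] (M : ℕ) (Γ : Ctx) :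
    Store V → List Stmt → Store V → Prop
| nil {μ} : StepStmtsP M Γ μ [] μ
| cons {μ μ' μ'' s ss} : StepStmtP M Γ μ s μ' → StepStmtsP M Γ μ' ss μ'' →
    StepStmtsP M Γ μ (s :: ss) μ''

/-! A well-typed expression has a defined value at every index within its type, provided the store
is defined at every cell declared in `Γ`: this is an induction on the typing derivation, whose only
content is that products split, transpositions swap, and contractions re-insert indices within
bounds. An assignment overwrites only cells of its target, which were already defined, by defined
values, so the domain of the store is invariant along the program. Uniqueness holds because each
evaluation step is a function of the current store. -/

namespace List

variable {α β : Type*} {R : α → β → Prop}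

theorem Forall₂.set {l₁ : List α} {l₂ : List β} (h : Forall₂ R l₁ l₂) {a : α} {b : β}
    (hab : R a b) (k : ℕ) : Forall₂ R (l₁.set k a) (l₂.set k b) := by
  induction h generalizing k with
  | nil => exact .nil
  | cons hxy _ ih => cases k <;> simp [*]

theorem Forall₂.insertIdx {l₁ : List α} {l₂ : List β} (h : Forall₂ R l₁ l₂) {a : α} {b : β}
    (hab : R a b) (k : ℕ) : Forall₂ R (l₁.insertIdx k a) (l₂.insertIdx k b) := by
  induction h generalizing k with
  | nil => cases k <;> simp [hab]
  | cons hxy _ ih => cases k <;> simp [*]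

theorem isSome_mapM {f : α → Option β} :
    ∀ {l : List α}, (∀ x ∈ l, (f x).isSome) → (l.mapM f).isSome
  | [], _ => rfl
  | a :: l, h => by
    obtain ⟨b, hb⟩ := Option.isSome_iff_exists.mp (h a mem_cons_self)
    obtain ⟨bs, hbs⟩ := Option.isSome_iff_exists.mp
      (isSome_mapM fun x hx => h x (mem_cons_of_mem a hx))
    simp [mapM_cons, hb, hbs]

end List

open List

theorem swapIdx_swapIdx {t : List ℕ} {m n : ℕ} (hm : m - 1 < t.length) (hn : n - 1 < t.length) :
    swapIdx (swapIdx t m n) m n = t := by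
  apply ext_getElem (by simp [swapIdx])
  intro k _ _
  simp only [swapIdx, getD_eq_getElem?_getD, getElem_set, getElem?_set]
  split_ifs <;> simp_all

theorem List.Forall₂.swapIdx {R : ℕ → ℕ → Prop} {l₁ l₂ : List ℕ} (h : Forall₂ R l₁ l₂)
    {m n : ℕ} (hm : m - 1 < l₂.length) (hn : n - 1 < l₂.length) :
    Forall₂ R (swapIdx l₁ m n) (swapIdx l₂ m n) := by
  have hR : ∀ k < l₂.length, R (l₁.getD k 0) (l₂.getD k 0) := fun k hk => by
    simpa [getD_eq_getElem, hk, h.length_eq ▸ hk] using h.get (h.length_eq ▸ hk) hk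
  exact (h.set (hR _ hn) _).set (hR _ hm) _

theorem insert2_delete2 {t : List ℕ} {m n : ℕ} (hm : 1 ≤ m) (hmn : m < n) (hn : n ≤ t.length)
    (heq : t.getD (m - 1) 0 = t.getD (n - 1) 0) :
    insert2 (delete2 t m n) m n (t.getD (m - 1) 0) = t := by
  have hm' : m - 1 < (t.eraseIdx (n - 1)).length := by
    rw [length_eraseIdx_of_lt (by omega)]; omega
  have hc : t.getD (m - 1) 0 = (t.eraseIdx (n - 1))[m - 1] := by
    rw [getElem_eraseIdx_of_lt _ (by omega), getD_eq_getElem]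
  rw [insert2, delete2, hc, insertIdx_eraseIdx_getElem hm', ← hc, heq,
    getD_eq_getElem _ _ (by omega), insertIdx_eraseIdx_getElem]

theorem idxLe_iff_forall₂ {i t : Index} :
    IdxLe i t ↔ Forall₂ (fun a b => 1 ≤ a ∧ a ≤ b) i t := by
  rw [forall₂_iff_get, IdxLe]
  refine and_congr_right fun hlen => ⟨fun h l h₁ h₂ => ?_, fun h l hl => ?_⟩
  · simpa [getD_eq_getElem, h₁, h₂] using h l h₂
  · simpa [getD_eq_getElem, hl, hlen ▸ hl] using h l (hlen ▸ hl) hl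

theorem idxLe_nil : IdxLe [] [] := idxLe_iff_forall₂.mpr .nil

theorem IdxLe.eq_nil {i : Index} (h : IdxLe i []) : i = [] := length_eq_zero_iff.mp h.1

theorem IdxLe.take_append {i t₀ t₁ : Index} (h : IdxLe i (t₀ ++ t₁)) :
    IdxLe (i.take t₀.length) t₀ :=
  idxLe_iff_forall₂.mpr (forall₂_take_append _ _ _ (idxLe_iff_forall₂.mp h))

theorem IdxLe.drop_append {i t₀ t₁ : Index} (h : IdxLe i (t₀ ++ t₁)) :
    IdxLe (i.drop t₀.length) t₁ :=
  idxLe_iff_forall₂.mpr (forall₂_drop_append _ _ _ (idxLe_iff_forall₂.mp h))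

theorem IdxLe.swapIdx_of_swapIdx {i t : Index} {m n : ℕ} (hm : 1 ≤ m) (hmn : m < n)
    (hn : n ≤ t.length) (h : IdxLe i (swapIdx t m n)) : IdxLe (swapIdx i m n) t := by
  have hswap := (idxLe_iff_forall₂.mp h).swapIdx (m := m) (n := n)
    (by simp [swapIdx]; omega) (by simp [swapIdx]; omega)
  rwa [swapIdx_swapIdx (by omega) (by omega), ← idxLe_iff_forall₂] at hswap

theorem IdxLe.insert2_of_delete2 {i t : Index} {m n l : ℕ} (hm : 1 ≤ m) (hmn : m < n)
    (hn : n ≤ t.length) (heq : t.getD (m - 1) 0 = t.getD (n - 1) 0)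
    (h : IdxLe i (delete2 t m n)) (hl₁ : 1 ≤ l) (hl₂ : l ≤ t.getD (m - 1) 0) :
    IdxLe (insert2 i m n l) t := by
  rw [idxLe_iff_forall₂, ← insert2_delete2 hm hmn hn heq]
  exact ((idxLe_iff_forall₂.mp h).insertIdx ⟨hl₁, hl₂⟩ _).insertIdx ⟨hl₁, hl₂⟩ _

theorem HasTy.inferTy_eq {Γ : Ctx} {e : Expr} {t : Ty} (h : HasTy Γ e t) :
    inferTy Γ e = some t := by
  induction h with
  | var hx => exact hx
  | paren _ ih => exact ih
  | prod _ _ ih₀ ih₁ => simp [inferTy, ih₀, ih₁]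
  | trans _ hm hmn hn ih => simp [inferTy, ih, hm, hmn, hn]
  | contr _ hm hmn hn heq ih => simpa [inferTy, ih, hm, hmn, hn] using heq
  | elem _ _ ih₀ ih₁ => simp [inferTy, ih₀, ih₁]
  | smul _ _ ih₀ ih₁ => simp [inferTy, ih₀, ih₁]
  | sdiv _ _ ih₀ ih₁ => simp [inferTy, ih₀, ih₁]

section Evaluation

variable {V : Type}

def DefinedOn (Γ : Ctx) (μ : Store V) : Prop :=
  ∀ x t i, Γ x = some t → IdxLe i t → μ (x, i) ≠ none

theorem initStore_definedOn (Γ : Ctx) (v : String → Index → W V) :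
    DefinedOn Γ (initStore Γ v) := by
  intro x t i hx hi
  simp [initStore, hx, hi]

variable [Field V] [DecidableEq V]

theorem eval_isSome_of_hasTy {Γ : Ctx} {μ : Store V} (hμ : DefinedOn Γ μ) {e : Expr} {t : Ty}
    (h : HasTy Γ e t) {i : Index} (hi : IdxLe i t) : (eval Γ μ e i).isSome := by
  induction h generalizing i with
  | var hx => exact Option.isSome_iff_ne_none.mpr (hμ _ _ _ hx hi)
  | paren _ ih => exact ih hi
  | prod h₀ _ ih₀ ih₁ =>
    obtain ⟨v₀, hv₀⟩ := Option.isSome_iff_exists.mp (ih₀ hi.take_append)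
    obtain ⟨v₁, hv₁⟩ := Option.isSome_iff_exists.mp (ih₁ hi.drop_append)
    simp [eval, h₀.inferTy_eq, hv₀, hv₁]
  | trans _ hm hmn hn ih => exact ih (hi.swapIdx_of_swapIdx hm hmn hn)
  | @contr e t m n h hm hmn hn heq ih =>
    obtain ⟨vs, hvs⟩ := Option.isSome_iff_exists.mp <|
      isSome_mapM (l := range (t.getD (m - 1) 0)) fun l hl =>
        have := mem_range.mp hl
        ih (hi.insert2_of_delete2 hm hmn hn heq (l := l + 1) (by omega) (by omega))
    rw [getD_eq_getElem?_getD] at hvs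
    simp [eval, h.inferTy_eq, hvs]
  | @elem _ _ _ t h₀ h₁ ih₀ ih₁ =>
    obtain ⟨v₀, hv₀⟩ := Option.isSome_iff_exists.mp (ih₀ hi)
    obtain ⟨v₁, hv₁⟩ := Option.isSome_iff_exists.mp (ih₁ hi)
    rcases eq_or_ne t [] with rfl | ht
    -- at type `[]` the scalar branches of `eval` may fire; they read both operands at `[] = i`
    · obtain rfl := hi.eq_nil
      simp only [eval, h₀.inferTy_eq, h₁.inferTy_eq, hv₀, hv₁, Option.pure_def,
        Option.bind_eq_bind, Option.bind_some, and_true]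
      split_ifs <;> simp
    · simp [eval, h₀.inferTy_eq, h₁.inferTy_eq, hv₀, hv₁, ht]
  | smul h₀ h₁ ih₀ ih₁ =>
    obtain ⟨v₀, hv₀⟩ := Option.isSome_iff_exists.mp (ih₀ idxLe_nil)
    obtain ⟨v₁, hv₁⟩ := Option.isSome_iff_exists.mp (ih₁ hi)
    simp [eval, h₀.inferTy_eq, h₁.inferTy_eq, hv₀, hv₁]
  | sdiv h₀ h₁ ih₀ ih₁ =>
    obtain ⟨v₀, hv₀⟩ := Option.isSome_iff_exists.mp (ih₀ hi)
    obtain ⟨v₁, hv₁⟩ := Option.isSome_iff_exists.mp (ih₁ idxLe_nil)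
    simp [eval, h₀.inferTy_eq, h₁.inferTy_eq, hv₀, hv₁]

theorem StepStmt.exists_of_hasTy {Γ : Ctx} {μ : Store V} (hμ : DefinedOn Γ μ) {x : String}
    {e : Expr} {t : Ty} (hx : Γ x = some t) (he : HasTy Γ e t) :
    ∃ μ', StepStmt Γ μ (x, e) μ' ∧ ∀ p, μ' p ≠ none ↔ μ p ≠ none := by
  refine ⟨_, .mk hx (fun i => hμ x t i hx) (fun i => eval_isSome_of_hasTy hμ he),
    fun p => ?_⟩
  split_ifs with hp
  · obtain ⟨rfl, hi⟩ := hp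
    exact iff_of_true (Option.isSome_iff_ne_none.mp (eval_isSome_of_hasTy hμ he hi))
      (hμ p.1 t p.2 hx hi)
  · rfl

theorem StepStmts.exists_of_ok {Γ : Ctx} {ss : List Stmt} (hok : Ok Γ ss) {μ : Store V}
    (hμ : DefinedOn Γ μ) : ∃ μ', StepStmts Γ μ ss μ' ∧ ∀ p, μ' p ≠ none ↔ μ p ≠ none := by
  induction ss generalizing μ with
  | nil => exact ⟨μ, .nil, fun _ => Iff.rfl⟩
  | cons s ss ih =>
    obtain ⟨t, hx, he⟩ := hok s mem_cons_self
    obtain ⟨μ₁, hs, hdom₁⟩ := StepStmt.exists_of_hasTy hμ hx he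
    obtain ⟨μ₂, hss, hdom₂⟩ := ih (fun s' hs' => hok s' (mem_cons_of_mem s hs'))
      (fun y t' i hy hi => (hdom₁ _).mpr (hμ y t' i hy hi))
    exact ⟨μ₂, .cons hs hss, fun p => (hdom₂ p).trans (hdom₁ p)⟩

theorem StepStmt.det {Γ : Ctx} {μ μ₁ μ₂ : Store V} {s : Stmt} (h₁ : StepStmt Γ μ s μ₁)
    (h₂ : StepStmt Γ μ s μ₂) : μ₁ = μ₂ := by
  obtain ⟨hx₁, -, -⟩ := h₁
  obtain ⟨hx₂, -, -⟩ := h₂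
  cases hx₁.symm.trans hx₂
  rfl

theorem StepStmts.det {Γ : Ctx} {μ μ₁ μ₂ : Store V} {ss : List Stmt}
    (h₁ : StepStmts Γ μ ss μ₁) (h₂ : StepStmts Γ μ ss μ₂) : μ₁ = μ₂ := by
  induction h₁ generalizing μ₂ with
  | nil => cases h₂; rfl
  | cons hs _ ih =>
    obtain _ | ⟨hs', hss'⟩ := h₂
    cases hs.det hs'
    exact ih hss'

end Evaluation

/-- **Progress / program evaluation**: a well-formed program has a unique final
store `μ'`, and `dom μ' = dom μ(Γ)`. -/
theorem program_evaluation (V : Type) [Field V] [DecidableEq V] (Γ : Ctx)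
    (v : String → Index → W V) (ss : List Stmt) (hok : Ok Γ ss) :
    ∃! μ' : Store V, StepStmts Γ (initStore Γ v) ss μ' ∧
      ∀ p, (μ' p ≠ none ↔ initStore Γ v p ≠ none) := by
  obtain ⟨μ', hsteps, hdom⟩ := StepStmts.exists_of_ok hok (initStore_definedOn Γ v)
  exact ⟨μ', ⟨hsteps, hdom⟩, fun _ h => h.1.det hsteps⟩
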